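/- arXiv:2304.09586 — 4 statements merged into one kernel-verified Lean document; each statement's English description precedes it below -/
import Mathlib

section
/- Let $X$ be a Banach space and let $\Psi = \{\psi_k\}_{k=1}^\infty$ satisfy the unconditional bound UB($a, K$) with $0 \le a < 1$, $K > 0$. Let $f = \sum_{k=1}^\infty c_k \psi_k$ (converging in $X$) and let $a_n(f)$ denote the decreasing rearrangement of $(|c_k|)$. Then $\|f\|_X \le 4K \sum_{n=1}^\infty n^{a-1} a_n(f)$. -/
/-!
Write `c (e k) • ψ (e k) = |c (e k)| • (ε k • ψ (e k))` with signs `ε k = ±1`. By UB(a, K)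
the partial sums of the signed vectors satisfy `‖∑_{k<m} ε k • ψ (e k)‖ ≤ K m^a`, and
`m^a ≤ ∑_{k<m} (k+1)^(a-1)` since `(k+1)^a - k^a ≤ (k+1)^(a-1)` whenever `a ≤ 1`.
Abel summation against the decreasing weights `|c (e k)|` then bounds every partial sum of the
rearranged series by `K ∑_k (k+1)^(a-1) |c (e k)|`; so the bound holds even with `1` in place
of `4`.
-/

open Finset

theorem Real.add_one_rpow_le_rpow_add_rpow_sub_one {x a : ℝ} (hx : 0 < x) (ha : a ≤ 1) :
    (x + 1) ^ a ≤ x ^ a + (x + 1) ^ (a - 1) := by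
  have hx1 : 0 < x + 1 := by linarith
  have hmono : (x + 1) ^ (a - 1) ≤ x ^ (a - 1) :=
    Real.rpow_le_rpow_of_nonpos hx (by linarith) (by linarith)
  calc (x + 1) ^ a = (x + 1) ^ (a - 1) * x + (x + 1) ^ (a - 1) := by
        rw [← mul_add_one, ← Real.rpow_add_one hx1.ne', sub_add_cancel]
    _ ≤ x ^ (a - 1) * x + (x + 1) ^ (a - 1) := by gcongr
    _ = x ^ a + (x + 1) ^ (a - 1) := by rw [← Real.rpow_add_one hx.ne', sub_add_cancel]

theorem Real.rpow_le_sum_range_add_one_rpow {a : ℝ} (ha : a ≤ 1) {m : ℕ} (hm : m ≠ 0) :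
    (m : ℝ) ^ a ≤ ∑ k ∈ range m, ((k : ℝ) + 1) ^ (a - 1) := by
  induction m with
  | zero => exact absurd rfl hm
  | succ m ih =>
    rcases Nat.eq_zero_or_pos m with rfl | hm0
    · simp
    rw [sum_range_succ, Nat.cast_succ]
    have := Real.add_one_rpow_le_rpow_add_rpow_sub_one (x := m) (by exact_mod_cast hm0) ha
    linarith [ih hm0.ne']

theorem norm_sum_range_smul_le_of_antitone {E : Type*} [SeminormedAddCommGroup E]
    [NormedSpace ℝ E] {b w : ℕ → ℝ} {x : ℕ → E} (hb : Antitone b) (hb0 : ∀ n, 0 ≤ b n)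
    (hx : ∀ m, ‖∑ k ∈ range m, x k‖ ≤ ∑ k ∈ range m, w k) (N : ℕ) :
    ‖∑ k ∈ range N, b k • x k‖ ≤ ∑ k ∈ range N, w k * b k := by
  have hdiff : ∀ i, 0 ≤ b i - b (i + 1) := fun i => sub_nonneg.2 (hb i.le_succ)
  simp_rw [mul_comm (w _), ← smul_eq_mul (b _)]
  rw [sum_range_by_parts b x, sum_range_by_parts b w]
  calc _ ≤ ‖b (N - 1) • ∑ k ∈ range N, x k‖
        + ‖∑ i ∈ range (N - 1), (b (i + 1) - b i) • ∑ k ∈ range (i + 1), x k‖ := norm_sub_le _ _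
    _ ≤ b (N - 1) * ‖∑ k ∈ range N, x k‖
        + ∑ i ∈ range (N - 1), (b i - b (i + 1)) * ‖∑ k ∈ range (i + 1), x k‖ := by
      rw [norm_smul, Real.norm_of_nonneg (hb0 _)]
      gcongr
      refine (norm_sum_le _ _).trans_eq (sum_congr rfl fun i _ => ?_)
      rw [norm_smul, Real.norm_of_nonpos (by linarith [hdiff i]), neg_sub]
    _ ≤ b (N - 1) * ∑ k ∈ range N, w k
        + ∑ i ∈ range (N - 1), (b i - b (i + 1)) * ∑ k ∈ range (i + 1), w k := by
      gcongr with i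
      · exact hb0 _
      · exact hx _
      · exact hdiff i
      · exact hx _
    _ = b (N - 1) • ∑ k ∈ range N, w k
        - ∑ i ∈ range (N - 1), (b (i + 1) - b i) • ∑ k ∈ range (i + 1), w k := by
      simp only [smul_eq_mul, sub_eq_add_neg (b (N - 1) * _), ← sum_neg_distrib, ← neg_mul,
        neg_sub]

/-- The condition UB(a, K) on a sequence `ψ`. -/
def UnconditionalBound {X : Type*} [SeminormedAddCommGroup X] [Module ℝ X] (ψ : ℕ → X)
    (K a : ℝ) : Prop :=
  ∀ (Λ : Finset ℕ) (ε : ℕ → ℝ), (∀ k ∈ Λ, ε k = 1 ∨ ε k = -1) →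
    ‖∑ k ∈ Λ, ε k • ψ k‖ ≤ K * (Λ.card : ℝ) ^ a

namespace UnconditionalBound

variable {X : Type*} [SeminormedAddCommGroup X] [NormedSpace ℝ X] {ψ : ℕ → X} {K a : ℝ}

theorem norm_sum_range_sign_comp_le (hψ : UnconditionalBound ψ K a) (hK : 0 ≤ K) (ha : a ≤ 1)
    {ε : ℕ → ℝ} (hε : ∀ k, ε k = 1 ∨ ε k = -1) {e : ℕ → ℕ} (he : Function.Injective e)
    (m : ℕ) :
    ‖∑ k ∈ range m, ε (e k) • ψ (e k)‖ ≤ ∑ k ∈ range m, K * ((k : ℝ) + 1) ^ (a - 1) := by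
  rcases eq_or_ne m 0 with rfl | hm
  · simp
  have hinj : Set.InjOn e (range m) := he.injOn
  calc ‖∑ k ∈ range m, ε (e k) • ψ (e k)‖ = ‖∑ j ∈ (range m).image e, ε j • ψ j‖ := by
        rw [sum_image hinj]
    _ ≤ K * (m : ℝ) ^ a := by
        have := hψ ((range m).image e) ε fun k _ => hε k
        rwa [card_image_of_injOn hinj, card_range] at this
    _ ≤ ∑ k ∈ range m, K * ((k : ℝ) + 1) ^ (a - 1) := by
        rw [← mul_sum]
        exact mul_le_mul_of_nonneg_left (Real.rpow_le_sum_range_add_one_rpow ha hm) hK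

theorem norm_sum_range_smul_comp_le (hψ : UnconditionalBound ψ K a) (hK : 0 ≤ K) (ha : a ≤ 1)
    {c : ℕ → ℝ} {e : ℕ → ℕ} (he : Function.Injective e) (hc : Antitone fun n => |c (e n)|)
    (N : ℕ) :
    ‖∑ k ∈ range N, c (e k) • ψ (e k)‖
      ≤ K * ∑ k ∈ range N, ((k : ℝ) + 1) ^ (a - 1) * |c (e k)| := by
  set ε : ℕ → ℝ := fun j => if 0 ≤ c j then 1 else -1
  have hε : ∀ j, ε j = 1 ∨ ε j = -1 := fun j => by by_cases h : 0 ≤ c j <;> simp [ε, h]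
  have hc_eq : ∀ j, c j • ψ j = |c j| • ε j • ψ j := fun j => by
    by_cases h : 0 ≤ c j
    · simp [ε, h, abs_of_nonneg h]
    · simp [ε, h, abs_of_neg (not_le.1 h)]
  simp only [hc_eq, mul_sum, ← mul_assoc]
  exact norm_sum_range_smul_le_of_antitone hc (fun _ => abs_nonneg _)
    (hψ.norm_sum_range_sign_comp_le hK ha hε he) N

end UnconditionalBound

theorem stmt4_general {X : Type*} [NormedAddCommGroup X] [NormedSpace ℝ X]
    (ψ : ℕ → X) (K a : ℝ) (hK : 0 < K) (ha1 : a < 1)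
    (hUB : ∀ (Λ : Finset ℕ) (ε : ℕ → ℝ), (∀ k ∈ Λ, ε k = 1 ∨ ε k = -1) →
      ‖∑ k ∈ Λ, ε k • ψ k‖ ≤ K * (Λ.card : ℝ) ^ a)
    (c : ℕ → ℝ) (f : X) (hc : Summable fun k => |c k|)
    (hf : HasSum (fun k => c k • ψ k) f)
    (e : ℕ ≃ ℕ) (he : Antitone fun n => |c (e n)|) :
    ‖f‖ ≤ 4 * K * ∑' n : ℕ, ((n : ℝ) + 1) ^ (a - 1) * |c (e n)| := by
  set T := ∑' n : ℕ, ((n : ℝ) + 1) ^ (a - 1) * |c (e n)|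
  have hterm_nonneg : ∀ n : ℕ, 0 ≤ ((n : ℝ) + 1) ^ (a - 1) * |c (e n)| := fun n => by positivity
  have hsum : Summable fun n : ℕ => ((n : ℝ) + 1) ^ (a - 1) * |c (e n)| :=
    (e.summable_iff.2 hc).of_nonneg_of_le hterm_nonneg fun n =>
      mul_le_of_le_one_left (abs_nonneg _)
        (Real.rpow_le_one_of_one_le_of_nonpos (by simp) (by linarith))
  have hpartial : ∀ N, ‖∑ k ∈ range N, c (e k) • ψ (e k)‖ ≤ K * T := fun N =>
    (UnconditionalBound.norm_sum_range_smul_comp_le hUB hK.le ha1.le e.injective he N).trans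
      (by gcongr; exact hsum.sum_le_tsum _ fun n _ => hterm_nonneg n)
  have hnorm : ‖f‖ ≤ K * T := le_of_tendsto' (e.hasSum_iff.2 hf).tendsto_sum_nat.norm hpartial
  have hT : 0 ≤ T := tsum_nonneg hterm_nonneg
  linarith [mul_nonneg hK.le hT]

/-- If `ψ` satisfies the unconditional bound UB(a, K) with `0 ≤ a < 1`, `K > 0`, and
`f = ∑ c k • ψ k` (with absolutely summable coefficients), then
`‖f‖ ≤ 4 K ∑_{n=1}^∞ n^(a-1) a_n(f)`, where `a_n(f) = |c (e (n-1))|` is the decreasing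
rearrangement of `(|c k|)` given by a bijection `e`. -/
theorem stmt4 {X : Type*} [NormedAddCommGroup X] [NormedSpace ℝ X] [CompleteSpace X]
    (ψ : ℕ → X) (K a : ℝ) (hK : 0 < K) (ha0 : 0 ≤ a) (ha1 : a < 1)
    (hUB : ∀ (Λ : Finset ℕ) (ε : ℕ → ℝ), (∀ k ∈ Λ, ε k = 1 ∨ ε k = -1) →
      ‖∑ k ∈ Λ, ε k • ψ k‖ ≤ K * (Λ.card : ℝ) ^ a)
    (c : ℕ → ℝ) (f : X) (hc : Summable fun k => |c k|)
    (hf : HasSum (fun k => c k • ψ k) f)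
    (e : ℕ ≃ ℕ) (he : Antitone fun n => |c (e n)|) :
    ‖f‖ ≤ 4 * K * ∑' n : ℕ, ((n : ℝ) + 1) ^ (a - 1) * |c (e n)| :=
  stmt4_general ψ K a hK ha1 hUB c f hc hf e he
end

section
/- Let $X$ be a Banach space with a Schauder basis $\Psi$ satisfying UB($a, K$) with $0 \le a < 1$. Then for every $f$ with $\|f\|_{A_1(\Psi)} \le 1$ (i.e., coefficients $c_k(f)$ with $\sum_k |c_k(f)| \le 1$), every realization of the Thresholding Greedy Algorithm satisfies $\|f - G_m(f, \Psi, \varrho)\|_X \le 4K m^{a-1}$ for all $m \ge 1$. -/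
open Finset

/-!
The tail of `f` after `m` greedy steps is cut into the dyadic blocks `[2^i m, 2^(i+1) m)` of the
greedy order. On the block starting at `N = 2^i m` every coefficient is at most `|c_{k_N}|`, so
UB(a, K) bounds its norm by `K N^a |c_{k_N}| ≤ K m^(a-1) N |c_{k_N}|`. Monotonicity gives
`N |c_{k_N}| ≤ 2 ∑_{N/2 ≤ l < N} |c_{k_l}|`, and these ranges are disjoint, so the blocks add up
to at most `2 K m^(a-1) ‖f‖_{A₁}`.
-/

/-- The condition UB(a, K). -/
def HasSignSumBound {ι X : Type*} [NormedAddCommGroup X] [NormedSpace ℝ X]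
    (ψ : ι → X) (K a : ℝ) : Prop :=
  ∀ (Λ : Finset ι) (ε : ι → ℝ), (∀ k ∈ Λ, ε k = 1 ∨ ε k = -1) →
    ‖∑ k ∈ Λ, ε k • ψ k‖ ≤ K * (Λ.card : ℝ) ^ a

namespace HasSignSumBound

variable {ι X : Type*} [NormedAddCommGroup X] [NormedSpace ℝ X] {ψ : ι → X} {K a : ℝ}

theorem comp_equiv {κ : Type*} (h : HasSignSumBound ψ K a) (e : κ ≃ ι) :
    HasSignSumBound (ψ ∘ e) K a := by
  intro Λ ε hε
  have := h (Λ.map e.toEmbedding) (ε ∘ e.symm) (by simpa using fun k => hε (e.symm k))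
  simpa [sum_map] using this

/-- Peeling off the smallest coefficient writes `t` as a multiple of a sign vector plus a vector
supported on fewer indices. -/
theorem norm_sum_smul_le (h : HasSignSumBound ψ K a) (hK : 0 ≤ K) (ha : 0 ≤ a)
    (Λ : Finset ι) {t : ι → ℝ} {M : ℝ} (hM : 0 ≤ M) (ht : ∀ k ∈ Λ, |t k| ≤ M) :
    ‖∑ k ∈ Λ, t k • ψ k‖ ≤ K * M * (Λ.card : ℝ) ^ a := by
  classical
  induction Λ using Finset.strongInduction generalizing t M with
  | H Λ ih =>
    rcases Λ.eq_empty_or_nonempty with rfl | hne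
    · simpa using mul_nonneg (mul_nonneg hK hM) (Real.rpow_nonneg le_rfl a)
    obtain ⟨k₀, hk₀, hmin⟩ := Λ.exists_min_image (fun k => |t k|) hne
    set μ := |t k₀|
    set ε : ι → ℝ := fun k => if 0 ≤ t k then 1 else -1
    have hε : ∀ k, ε k = 1 ∨ ε k = -1 := fun k => by by_cases hk : 0 ≤ t k <;> simp [ε, hk]
    have ht_eq : ∀ k, t k = ε k * |t k| := fun k => by
      by_cases hk : 0 ≤ t k
      · simp [ε, hk, abs_of_nonneg hk]
      · simp [ε, hk, abs_of_neg (not_le.mp hk)]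
    set t' : ι → ℝ := fun k => ε k * (|t k| - μ)
    have ht' : ∀ k ∈ Λ.erase k₀, |t' k| ≤ M - μ := fun k hk => by
      have hkΛ := mem_of_mem_erase hk
      have hεk : |ε k| = 1 := by rcases hε k with hεk | hεk <;> simp [hεk]
      rw [abs_mul, hεk, one_mul, abs_of_nonneg (sub_nonneg.mpr (hmin k hkΛ))]
      linarith [ht k hkΛ]
    have hsplit :
        ∑ k ∈ Λ, t k • ψ k = ∑ k ∈ Λ.erase k₀, t' k • ψ k + μ • ∑ k ∈ Λ, ε k • ψ k := by
      rw [sum_erase _ (by simp [t', μ]), smul_sum, ← sum_add_distrib]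
      refine sum_congr rfl fun k _ => ?_
      rw [smul_smul, ← add_smul, ht_eq k]
      congr 1
      ring
    have hμ0 : 0 ≤ μ := abs_nonneg _
    have hμ : μ ≤ M := ht k₀ hk₀
    have hcard : ((Λ.erase k₀).card : ℝ) ^ a ≤ (Λ.card : ℝ) ^ a :=
      Real.rpow_le_rpow (Nat.cast_nonneg _) (Nat.cast_le.mpr (card_erase_le)) ha
    calc ‖∑ k ∈ Λ, t k • ψ k‖
        ≤ ‖∑ k ∈ Λ.erase k₀, t' k • ψ k‖ + μ * ‖∑ k ∈ Λ, ε k • ψ k‖ := by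
          rw [hsplit, ← norm_smul_of_nonneg hμ0]
          exact norm_add_le _ _
      _ ≤ K * (M - μ) * (Λ.card : ℝ) ^ a + μ * (K * (Λ.card : ℝ) ^ a) := by
          gcongr
          · exact (ih _ (erase_ssubset hk₀) (sub_nonneg.mpr hμ) ht').trans
              (mul_le_mul_of_nonneg_left hcard (mul_nonneg hK (sub_nonneg.mpr hμ)))
          · exact h Λ ε fun k _ => hε k
      _ = K * M * (Λ.card : ℝ) ^ a := by ring

end HasSignSumBound

namespace Antitone

variable {u : ℕ → ℝ}

theorem mul_le_two_mul_sum_Ico_half (hu : Antitone u) {N : ℕ} (hN0 : 0 ≤ u N) :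
    N * u N ≤ 2 * ∑ l ∈ Ico (N / 2) N, u l := by
  have hmean := card_nsmul_le_sum (Ico (N / 2) N) u (u N)
    fun l hl => hu (mem_Ico.mp hl).2.le
  have hN : (N : ℝ) ≤ 2 * ((N - N / 2 : ℕ) : ℝ) := by
    exact_mod_cast (by omega : N ≤ 2 * (N - N / 2))
  rw [Nat.card_Ico, nsmul_eq_mul] at hmean
  nlinarith

theorem sum_condensed_mul_le (hu : Antitone u) (hu0 : ∀ n, 0 ≤ u n) (n I : ℕ) :
    ∑ i ∈ range I, ((2 ^ i * n : ℕ) : ℝ) * u (2 ^ i * n) ≤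
      2 * ∑ l ∈ range (2 ^ I * n / 2), u l := by
  induction I with
  | zero => simpa using sum_nonneg fun l _ => hu0 l
  | succ I ih =>
    have hhalf : 2 ^ (I + 1) * n / 2 = 2 ^ I * n := by
      rw [show 2 ^ (I + 1) * n = 2 * (2 ^ I * n) by ring, Nat.mul_div_cancel_left _ two_pos]
    rw [sum_range_succ, hhalf, ← sum_range_add_sum_Ico u (Nat.div_le_self (2 ^ I * n) 2),
      mul_add]
    exact add_le_add ih (hu.mul_le_two_mul_sum_Ico_half (hu0 _))

end Antitone

namespace HasSignSumBound

variable {X : Type*} [NormedAddCommGroup X] [NormedSpace ℝ X] {φ : ℕ → X} {g : ℕ → ℝ} {K a : ℝ}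
  {m : ℕ}

theorem norm_sum_dyadic_block_le (h : HasSignSumBound φ K a) (hK : 0 ≤ K) (ha0 : 0 ≤ a)
    (ha1 : a ≤ 1)
    (hg : Antitone fun j => |g j|) (hm : 0 < m) {N : ℕ} (hmN : m ≤ N)
    {S : Finset ℕ} (hS : S ⊆ Ico N (2 * N)) :
    ‖∑ j ∈ S, g j • φ j‖ ≤ K * (m : ℝ) ^ (a - 1) * (N * |g N|) := by
  have hN : (0 : ℝ) < N := by exact_mod_cast hm.trans_le hmN
  have hcard : (S.card : ℝ) ≤ N := by
    have := card_le_card hS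
    rw [Nat.card_Ico] at this
    exact_mod_cast (by omega : S.card ≤ N)
  calc ‖∑ j ∈ S, g j • φ j‖ ≤ K * |g N| * (S.card : ℝ) ^ a :=
        h.norm_sum_smul_le hK ha0 S (abs_nonneg _) fun j hj => hg (mem_Ico.mp (hS hj)).1
    _ ≤ K * |g N| * (N : ℝ) ^ a := by gcongr
    _ = K * (N : ℝ) ^ (a - 1) * (N * |g N|) := by
        rw [Real.rpow_sub_one hN.ne']
        field_simp
    _ ≤ K * (m : ℝ) ^ (a - 1) * (N * |g N|) := by
        have hmR : (0 : ℝ) < m := by exact_mod_cast hm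
        have hmN' : (m : ℝ) ≤ N := by exact_mod_cast hmN
        gcongr K * ?_ * _
        exact Real.rpow_le_rpow_of_nonpos hmR hmN' (by linarith)

theorem norm_sum_dyadic_le (h : HasSignSumBound φ K a) (hK : 0 ≤ K) (ha0 : 0 ≤ a) (ha1 : a ≤ 1)
    (hg : Antitone fun j => |g j|) (hm : 0 < m) (I : ℕ)
    {S : Finset ℕ} (hS : S ⊆ Ico m (2 ^ I * m)) :
    ‖∑ j ∈ S, g j • φ j‖ ≤
      K * (m : ℝ) ^ (a - 1) * ∑ i ∈ range I, ((2 ^ i * m : ℕ) : ℝ) * |g (2 ^ i * m)| := by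
  induction I generalizing S with
  | zero =>
    obtain rfl : S = ∅ := by simpa using hS
    simp
  | succ I ih =>
    rw [← sum_filter_add_sum_filter_not S (· < 2 ^ I * m), sum_range_succ, mul_add]
    refine (norm_add_le _ _).trans (add_le_add (ih fun j hj => ?_)
      (h.norm_sum_dyadic_block_le hK ha0 ha1 hg hm (Nat.le_mul_of_pos_left m (by positivity))
        fun j hj => ?_))
    · rw [mem_filter] at hj
      exact mem_Ico.mpr ⟨(mem_Ico.mp (hS hj.1)).1, hj.2⟩
    · rw [mem_filter] at hj
      have := (mem_Ico.mp (hS hj.1)).2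
      rw [pow_succ] at this
      exact mem_Ico.mpr ⟨not_lt.mp hj.2, by linarith⟩

theorem norm_sum_Ico_le (h : HasSignSumBound φ K a) (hK : 0 ≤ K) (ha0 : 0 ≤ a) (ha1 : a ≤ 1)
    (hg : Antitone fun j => |g j|) (hm : 0 < m)
    {B : ℝ} (hB : ∀ n, ∑ l ∈ range n, |g l| ≤ B) (N : ℕ) :
    ‖∑ j ∈ Ico m N, g j • φ j‖ ≤ 2 * K * B * (m : ℝ) ^ (a - 1) := by
  have hN : N ≤ 2 ^ N * m := (Nat.lt_two_pow_self).le.trans (Nat.le_mul_of_pos_right _ hm)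
  calc ‖∑ j ∈ Ico m N, g j • φ j‖
      ≤ K * (m : ℝ) ^ (a - 1) * ∑ i ∈ range N, ((2 ^ i * m : ℕ) : ℝ) * |g (2 ^ i * m)| :=
        h.norm_sum_dyadic_le hK ha0 ha1 hg hm N (Ico_subset_Ico_right hN)
    _ ≤ K * (m : ℝ) ^ (a - 1) * (2 * B) := by
        gcongr
        exact (hg.sum_condensed_mul_le (fun j => abs_nonneg (g j)) m N).trans
          (by linarith [hB (2 ^ N * m / 2)])
    _ = 2 * K * B * (m : ℝ) ^ (a - 1) := by ring

theorem norm_sub_sum_range_le (h : HasSignSumBound φ K a) (hK : 0 ≤ K) (ha0 : 0 ≤ a) (ha1 : a ≤ 1)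
    (hg : Antitone fun j => |g j|) (hm : 0 < m)
    {B : ℝ} (hB : ∀ n, ∑ l ∈ range n, |g l| ≤ B) {f : X}
    (hf : HasSum (fun j => g j • φ j) f) :
    ‖f - ∑ j ∈ range m, g j • φ j‖ ≤ 2 * K * B * (m : ℝ) ^ (a - 1) := by
  have hlim : Filter.Tendsto (fun N => ∑ j ∈ Ico m N, g j • φ j) Filter.atTop
      (nhds (f - ∑ j ∈ range m, g j • φ j)) :=
    (hf.tendsto_sum_nat.sub_const _).congr'
      (Filter.eventually_atTop.mpr ⟨m, fun N hN => (sum_Ico_eq_sub _ hN).symm⟩)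
  exact le_of_tendsto' hlim.norm (h.norm_sum_Ico_le hK ha0 ha1 hg hm hB)

end HasSignSumBound

theorem stmt5_general {X : Type*} [NormedAddCommGroup X] [NormedSpace ℝ X]
    (ψ : ℕ → X) (K a : ℝ) (hK : 0 < K) (ha0 : 0 ≤ a) (ha1 : a < 1)
    (hUB : ∀ (Λ : Finset ℕ) (ε : ℕ → ℝ), (∀ k ∈ Λ, ε k = 1 ∨ ε k = -1) →
      ‖∑ k ∈ Λ, ε k • ψ k‖ ≤ K * (Λ.card : ℝ) ^ a)
    (c : ℕ → ℝ) (f : X) (hc : Summable fun k => |c k|) (hA1 : ∑' k, |c k| ≤ 1)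
    (hf : HasSum (fun k => c k • ψ k) f)
    (e : ℕ ≃ ℕ) (he : Antitone fun n => |c (e n)|)
    (m : ℕ) (hm : 1 ≤ m) :
    ‖f - ∑ j ∈ Finset.range m, c (e j) • ψ (e j)‖ ≤ 4 * K * (m : ℝ) ^ (a - 1) := by
  have hUBe : HasSignSumBound (ψ ∘ e) K a := HasSignSumBound.comp_equiv hUB e
  have hsum : ∀ n, ∑ l ∈ range n, |c (e l)| ≤ 1 := fun n =>
    ((e.summable_iff.mpr hc).sum_le_tsum (range n) fun l _ => abs_nonneg _).trans
      ((e.tsum_eq fun k => |c k|).trans_le hA1)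
  calc ‖f - ∑ j ∈ range m, c (e j) • ψ (e j)‖ ≤ 2 * K * 1 * (m : ℝ) ^ (a - 1) :=
        hUBe.norm_sub_sum_range_le hK.le ha0 ha1.le he hm hsum (e.hasSum_iff.mpr hf)
    _ ≤ 4 * K * (m : ℝ) ^ (a - 1) := by
        have := Real.rpow_nonneg (Nat.cast_nonneg m) (a - 1)
        nlinarith

/-- If a basis `ψ` satisfies UB(a, K) with `0 ≤ a < 1`, then for every `f = ∑ c k • ψ k`
with `∑ |c k| ≤ 1` (i.e. `‖f‖_{A₁(Ψ)} ≤ 1`), every realization of the Thresholding Greedy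
Algorithm (given by a decreasing rearrangement `e` of the coefficients) satisfies
`‖f - G_m(f)‖ ≤ 4 K m^(a-1)` for all `m ≥ 1`. -/
theorem stmt5 {X : Type*} [NormedAddCommGroup X] [NormedSpace ℝ X] [CompleteSpace X]
    (ψ : ℕ → X) (hψ : ∀ k, ‖ψ k‖ ≤ 1) (K a : ℝ) (hK : 0 < K) (ha0 : 0 ≤ a) (ha1 : a < 1)
    (hUB : ∀ (Λ : Finset ℕ) (ε : ℕ → ℝ), (∀ k ∈ Λ, ε k = 1 ∨ ε k = -1) →
      ‖∑ k ∈ Λ, ε k • ψ k‖ ≤ K * (Λ.card : ℝ) ^ a)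
    (c : ℕ → ℝ) (f : X) (hc : Summable fun k => |c k|) (hA1 : ∑' k, |c k| ≤ 1)
    (hf : HasSum (fun k => c k • ψ k) f)
    (e : ℕ ≃ ℕ) (he : Antitone fun n => |c (e n)|)
    (m : ℕ) (hm : 1 ≤ m) :
    ‖f - ∑ j ∈ Finset.range m, c (e j) • ψ (e j)‖ ≤ 4 * K * (m : ℝ) ^ (a - 1) :=
  stmt5_general ψ K a hK ha0 ha1 hUB c f hc hA1 hf e he m hm
end

section
/- Let $X$ be a Banach space with a Schauder basis $\Psi = \{\psi_k\}$ with $\|\psi_k\| \le 1$, and let $b \in (0, 1]$. Suppose that for every $f \in A_1(\Psi)$ there exists a decreasing permutation $\varrho \in D(f)$ such that $\|f - G_m(f, \Psi, \varrho)\|_X \le m^{-b}$ for all $m \ge 1$. Then $\Psi$ satisfies UB($1-b$, $2$): for every finite $\Lambda \subset \mathbb{N}$ and every choice of signs $\epsilon_k = \pm 1$, $\|\sum_{k \in \Lambda} \epsilon_k \psi_k\|_X \le 2 |\Lambda|^{1-b}$. -/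
/-!
Take `Q` disjoint from `Λ` with `|Q| = |Λ| = m` and `t > 1`, and normalize
`f = D_{Λ,ε} + t D_Q` by `a = ((1 + t) m)⁻¹` so that its coefficients have `ℓ¹`-norm `1`.
The coefficients on `Q` strictly dominate all others, so every decreasing rearrangement lists
`Q` in its first `m` places; hence `f - G_m f = a D_{Λ,ε}`, and the rate `m^(-b)` gives
`‖D_{Λ,ε}‖ ≤ (1 + t) m^(1-b)`. Letting `t → 1` gives the constant `2`.
-/

open Finset

theorem Equiv.image_range_card_eq_of_antitone {β α : Type*} [DecidableEq β] [LinearOrder α]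
    {g : β → α} (e : ℕ ≃ β) (he : Antitone (g ∘ e)) {Q : Finset β}
    (hQ : ∀ k ∈ Q, ∀ l ∉ Q, g l < g k) : (range #Q).image e = Q := by
  have hmem : ∀ j < #Q, e j ∈ Q := by
    intro j hj
    by_contra hjQ
    have hsub : Q.image e.symm ⊆ range j := by
      intro i hi
      obtain ⟨k, hk, rfl⟩ := mem_image.1 hi
      rw [mem_range]
      by_contra! hji
      have hle : g k ≤ g (e j) := by simpa using he hji
      exact (hQ k hk _ hjQ).not_ge hle
    have := card_le_card hsub
    rw [card_image_of_injective _ e.symm.injective, card_range] at this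
    omega
  apply eq_of_subset_of_card_le
  · intro k hk
    obtain ⟨j, hj, rfl⟩ := mem_image.1 hk
    exact hmem j (mem_range.1 hj)
  · rw [card_image_of_injective _ e.injective, card_range]

theorem Finset.exists_disjoint_card_eq {α : Type*} [DecidableEq α] [Infinite α] (s : Finset α) :
    ∃ t : Finset α, Disjoint s t ∧ #t = #s := by
  obtain ⟨u, hsu, hu⟩ := Infinite.exists_superset_card_eq s (2 * #s) (by omega)
  refine ⟨u \ s, disjoint_sdiff, ?_⟩
  rw [card_sdiff_of_subset hsu, hu]
  omega

/-- Coefficients of the paper's test function `D_{Λ,ε} + t D_Q` before normalization. -/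
def testCoeff (Λ Q : Finset ℕ) (ε : ℕ → ℝ) (t : ℝ) (k : ℕ) : ℝ :=
  if k ∈ Λ then ε k else if k ∈ Q then t else 0

section testCoeff

variable {Λ Q : Finset ℕ} {ε : ℕ → ℝ} {t : ℝ}

theorem testCoeff_eq_zero {k : ℕ} (hk : k ∉ Λ ∪ Q) : testCoeff Λ Q ε t k = 0 := by
  rw [mem_union, not_or] at hk
  simp [testCoeff, hk.1, hk.2]

theorem abs_testCoeff_of_mem_left (hε : ∀ k ∈ Λ, |ε k| = 1) {k : ℕ} (hk : k ∈ Λ) :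
    |testCoeff Λ Q ε t k| = 1 := by
  simp [testCoeff, hk, hε k hk]

theorem testCoeff_of_mem_right (hΛQ : Disjoint Λ Q) {k : ℕ} (hk : k ∈ Q) :
    testCoeff Λ Q ε t k = t := by
  simp [testCoeff, hk, disjoint_right.1 hΛQ hk]

theorem abs_testCoeff_le_one (hε : ∀ k ∈ Λ, |ε k| = 1) {k : ℕ} (hk : k ∉ Q) :
    |testCoeff Λ Q ε t k| ≤ 1 := by
  by_cases hkΛ : k ∈ Λ
  · exact (abs_testCoeff_of_mem_left hε hkΛ).le
  · simp [testCoeff_eq_zero (mem_union.not.2 (not_or.2 ⟨hkΛ, hk⟩))]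

theorem hasSum_testCoeff_smul {X : Type*} [AddCommGroup X] [Module ℝ X] [TopologicalSpace X]
    (hΛQ : Disjoint Λ Q) (ψ : ℕ → X) :
    HasSum (fun k => testCoeff Λ Q ε t k • ψ k) (∑ k ∈ Λ, ε k • ψ k + t • ∑ k ∈ Q, ψ k) := by
  have h : HasSum (fun k => testCoeff Λ Q ε t k • ψ k) (∑ k ∈ Λ ∪ Q, testCoeff Λ Q ε t k • ψ k) :=
    hasSum_sum_of_ne_finset_zero fun k hk => by simp only [testCoeff_eq_zero hk, zero_smul]
  convert h using 1
  rw [sum_union hΛQ, smul_sum]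
  congr 1 <;> refine sum_congr rfl fun k hk => ?_
  · simp [testCoeff, hk]
  · rw [testCoeff_of_mem_right hΛQ hk]

theorem hasSum_abs_testCoeff (hε : ∀ k ∈ Λ, |ε k| = 1) (hΛQ : Disjoint Λ Q) :
    HasSum (fun k => |testCoeff Λ Q ε t k|) (#Λ + |t| * #Q) := by
  have h : HasSum (fun k => |testCoeff Λ Q ε t k|) (∑ k ∈ Λ ∪ Q, |testCoeff Λ Q ε t k|) :=
    hasSum_sum_of_ne_finset_zero fun k hk => by simp only [testCoeff_eq_zero hk, abs_zero]
  convert h using 1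
  rw [sum_union hΛQ, sum_eq_card_nsmul fun k hk => abs_testCoeff_of_mem_left hε hk,
    sum_eq_card_nsmul fun k hk => by rw [testCoeff_of_mem_right hΛQ hk], nsmul_one,
    nsmul_eq_mul, mul_comm]

end testCoeff

def HasGreedyRateOnA₁ {X : Type*} [NormedAddCommGroup X] [NormedSpace ℝ X] (ψ : ℕ → X)
    (b : ℝ) : Prop :=
  ∀ (c : ℕ → ℝ) (f : X), Summable (fun k => |c k|) → (∑' k, |c k|) ≤ 1 →
    HasSum (fun k => c k • ψ k) f →
    ∃ e : ℕ ≃ ℕ, Antitone (fun j => |c (e j)|) ∧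
      ∀ m : ℕ, 1 ≤ m → ‖f - ∑ j ∈ range m, c (e j) • ψ (e j)‖ ≤ (m : ℝ) ^ (-b)

theorem HasGreedyRateOnA₁.norm_sum_le {X : Type*} [NormedAddCommGroup X] [NormedSpace ℝ X]
    {ψ : ℕ → X} {b : ℝ} (hrate : HasGreedyRateOnA₁ ψ b) {Λ Q : Finset ℕ} (hΛQ : Disjoint Λ Q)
    (hcard : #Q = #Λ) (hΛ : Λ.Nonempty) {ε : ℕ → ℝ} (hε : ∀ k ∈ Λ, |ε k| = 1) {t : ℝ}
    (ht : 1 < t) : ‖∑ k ∈ Λ, ε k • ψ k‖ ≤ (1 + t) * (#Λ : ℝ) ^ (1 - b) := by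
  have hm : (0 : ℝ) < #Λ := by exact_mod_cast hΛ.card_pos
  set a : ℝ := ((1 + t) * #Λ)⁻¹
  have ha : 0 < a := by positivity
  set c : ℕ → ℝ := fun k => a * testCoeff Λ Q ε t k
  have hc : HasSum (fun k => |c k|) 1 := by
    have h := (hasSum_abs_testCoeff (t := t) hε hΛQ).mul_left a
    rw [hcard, abs_of_pos (by linarith), show a * (#Λ + t * #Λ) = 1 by
      rw [← one_add_mul]; exact inv_mul_cancel₀ (by positivity)] at h
    simpa only [c, abs_mul, abs_of_pos ha] using h
  have hf : HasSum (fun k => c k • ψ k) (a • (∑ k ∈ Λ, ε k • ψ k + t • ∑ k ∈ Q, ψ k)) := by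
    simpa only [c, mul_smul] using (hasSum_testCoeff_smul hΛQ ψ).const_smul a
  unfold HasGreedyRateOnA₁ at hrate
  obtain ⟨e, he, hrate_e⟩ := hrate c _ hc.summable hc.tsum_eq.le hf
  -- the coefficients on `Q` are strictly the largest, so `#Λ` greedy steps pick exactly `Q`
  have himage : (range #Λ).image e = Q := by
    rw [← hcard]
    refine e.image_range_card_eq_of_antitone (g := fun k => |c k|) he fun k hk l hl => ?_
    simp only [c, abs_mul, abs_of_pos ha, testCoeff_of_mem_right hΛQ hk,
      abs_of_pos (by linarith : 0 < t)]
    exact mul_lt_mul_of_pos_left ((abs_testCoeff_le_one hε hl).trans_lt ht) ha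
  have hgreedy : ∑ j ∈ range #Λ, c (e j) • ψ (e j) = a • t • ∑ k ∈ Q, ψ k := by
    rw [← sum_image (f := fun k => c k • ψ k) e.injective.injOn, himage, smul_sum, smul_sum]
    refine sum_congr rfl fun k hk => ?_
    simp only [c, testCoeff_of_mem_right hΛQ hk, mul_smul]
  have hbound := hrate_e #Λ (by exact_mod_cast hΛ.card_pos)
  rw [hgreedy, smul_add, add_sub_cancel_right, norm_smul, Real.norm_of_nonneg ha.le] at hbound
  calc ‖∑ k ∈ Λ, ε k • ψ k‖ = a⁻¹ * (a * ‖∑ k ∈ Λ, ε k • ψ k‖) := by field_simp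
    _ ≤ a⁻¹ * (#Λ : ℝ) ^ (-b) := by gcongr
    _ = (1 + t) * (#Λ : ℝ) ^ (1 - b) := by
      rw [inv_inv, sub_eq_add_neg, Real.rpow_add hm, Real.rpow_one, mul_assoc]

theorem stmt6_general {X : Type*} [NormedAddCommGroup X] [NormedSpace ℝ X]
    (ψ : ℕ → X) (b : ℝ)
    (hrate : ∀ (c : ℕ → ℝ) (f : X), Summable (fun k => |c k|) → (∑' k, |c k|) ≤ 1 →
      HasSum (fun k => c k • ψ k) f →
      ∃ e : ℕ ≃ ℕ, Antitone (fun j => |c (e j)|) ∧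
        ∀ m : ℕ, 1 ≤ m →
          ‖f - ∑ j ∈ Finset.range m, c (e j) • ψ (e j)‖ ≤ (m : ℝ) ^ (-b)) :
    ∀ (Λ : Finset ℕ) (ε : ℕ → ℝ), (∀ k ∈ Λ, ε k = 1 ∨ ε k = -1) →
      ‖∑ k ∈ Λ, ε k • ψ k‖ ≤ 2 * (Λ.card : ℝ) ^ (1 - b) := by
  intro Λ ε hε
  rcases Λ.eq_empty_or_nonempty with rfl | hΛ
  · simp only [sum_empty, norm_zero, card_empty, Nat.cast_zero]
    positivity
  have hε_abs : ∀ k ∈ Λ, |ε k| = 1 := fun k hk => by rcases hε k hk with h | h <;> simp [h]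
  obtain ⟨Q, hΛQ, hcard⟩ := Λ.exists_disjoint_card_eq
  have hM : 0 < (#Λ : ℝ) ^ (1 - b) := by have := hΛ.card_pos; positivity
  -- the weight `s - 1 > 1` on `Q` can be taken arbitrarily close to `1`
  rw [← div_le_iff₀ hM]
  refine le_of_forall_gt_imp_ge_of_dense fun s hs => (div_le_iff₀ hM).2 ?_
  simpa using HasGreedyRateOnA₁.norm_sum_le (ψ := ψ) (b := b) hrate hΛQ hcard hΛ hε_abs
    (t := s - 1) (by linarith)

/-- Criterion, part (A). Let `ψ` be a basis with `‖ψ k‖ ≤ 1` and `b ∈ (0,1]`. Suppose that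
for every `f ∈ A₁(Ψ)` (given by coefficients `c` with `∑ |c k| ≤ 1` and `f = ∑ c k • ψ k`)
there is a decreasing permutation `e ∈ D(f)` such that the greedy approximants satisfy
`‖f - G_m(f, Ψ, e)‖ ≤ m^(-b)` for all `m ≥ 1`. Then `Ψ` satisfies UB(1-b, 2):
`‖∑_{k ∈ Λ} ε k • ψ k‖ ≤ 2 |Λ|^(1-b)` for all finite `Λ` and signs `ε k = ±1`. -/
theorem stmt6 {X : Type*} [NormedAddCommGroup X] [NormedSpace ℝ X] [CompleteSpace X]
    (ψ : ℕ → X) (hψ : ∀ k, ‖ψ k‖ ≤ 1) (b : ℝ) (hb0 : 0 < b) (hb1 : b ≤ 1)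
    (hrate : ∀ (c : ℕ → ℝ) (f : X), Summable (fun k => |c k|) → (∑' k, |c k|) ≤ 1 →
      HasSum (fun k => c k • ψ k) f →
      ∃ e : ℕ ≃ ℕ, Antitone (fun j => |c (e j)|) ∧
        ∀ m : ℕ, 1 ≤ m →
          ‖f - ∑ j ∈ Finset.range m, c (e j) • ψ (e j)‖ ≤ (m : ℝ) ^ (-b)) :
    ∀ (Λ : Finset ℕ) (ε : ℕ → ℝ), (∀ k ∈ Λ, ε k = 1 ∨ ε k = -1) →
      ‖∑ k ∈ Λ, ε k • ψ k‖ ≤ 2 * (Λ.card : ℝ) ^ (1 - b) :=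
  stmt6_general ψ b hrate
end

section
/- Let $2 \le p < \infty$ and let $\Psi$ be an unconditional basis of $L_p(\Omega, \mu)$ with $\|\psi_n\|_p \le 1$. Then there is a constant $C(p, \Psi)$ such that for all $f$ with finite $A_1$-norm, all $m \ge 1$, and all $\alpha \in [0,1]$: $\|f - G_m(f, \Psi)\|_p \le C(p, \Psi)\, m^{-\alpha/2}\, \|f\|_p^{1-\alpha} \|f\|_{A_1(\Psi)}^{\alpha}$. -/
/-!
The remainder `f - G_m f` is controlled in two ways, and the claim is their interpolation with
weights `1 - α` and `α`.

Since the remainder is a coordinate projection of `f`, unconditionality gives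
`‖f - G_m f‖ ≤ K ‖f‖`.

For `p ≥ 2` the basis satisfies the upper square-function estimate
`‖∑ c_n ψ_n‖ ≤ C (∑ c_n ^ 2) ^ (1/2)`: by unconditionality the norm changes by at most a factor
`2K + 1` under sign changes, so it may be averaged over all signs; Khintchine's inequality
applied pointwise and Minkowski's inequality in `L_{p/2}` then bound the average. The
coefficients of the remainder are at most the `m`-th largest one, which is at most `‖f‖_{A₁} / m`,
so their squares sum to at most `‖f‖_{A₁} ^ 2 / m`, and `‖f - G_m f‖ ≤ C m^(-1/2) ‖f‖_{A₁}`.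
-/

open Finset MeasureTheory
open scoped ENNReal

section Khintchine

open Real Nat

variable {ι : Type*} [DecidableEq ι]

-- Subsets `Λ ⊆ S` encode the `2 ^ #S` choices of signs on `S`.
def signPattern (Λ : Finset ι) (i : ι) : ℝ := if i ∈ Λ then 1 else -1

lemma signPattern_of_mem {Λ : Finset ι} {i : ι} (h : i ∈ Λ) : signPattern Λ i = 1 := if_pos h

lemma signPattern_of_notMem {Λ : Finset ι} {i : ι} (h : i ∉ Λ) : signPattern Λ i = -1 :=
  if_neg h

lemma sum_powerset_exp_signPattern (S : Finset ι) (a : ι → ℝ) :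
    ∑ Λ ∈ S.powerset, exp (∑ i ∈ S, signPattern Λ i * a i) =
      ∏ i ∈ S, (exp (a i) + exp (-a i)) := by
  rw [prod_add]
  refine sum_congr rfl fun Λ hΛ => ?_
  rw [exp_sum, ← prod_sdiff (mem_powerset.1 hΛ), mul_comm]
  congr 1
  · exact prod_congr rfl fun i hi => by rw [signPattern_of_mem hi, one_mul]
  · refine prod_congr rfl fun i hi => ?_
    rw [signPattern_of_notMem (mem_sdiff.1 hi).2, neg_one_mul]

lemma sum_powerset_exp_signPattern_le (S : Finset ι) (a : ι → ℝ) :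
    ∑ Λ ∈ S.powerset, exp (∑ i ∈ S, signPattern Λ i * a i) ≤
      2 ^ S.card * exp ((∑ i ∈ S, a i ^ 2) / 2) := by
  rw [sum_powerset_exp_signPattern, sum_div, exp_sum, ← prod_const, ← prod_mul_distrib]
  refine prod_le_prod (fun i _ => by positivity) fun i _ => ?_
  linarith [cosh_le_exp_half_sq (a i), cosh_eq (a i)]

lemma abs_rpow_le_mul_exp_add_exp {r : ℝ} (hr : 0 ≤ r) (x : ℝ) :
    |x| ^ r ≤ (1 + ⌈r⌉₊ !) * (exp x + exp (-x)) := by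
  set n := ⌈r⌉₊
  have hexp_abs : exp |x| ≤ exp x + exp (-x) := by
    cases abs_choice x with
    | inl h => rw [h]; linarith [exp_pos (-x)]
    | inr h => rw [h]; linarith [exp_pos x]
  have hone : 1 ≤ exp x + exp (-x) := by
    linarith [add_one_le_exp |x|, abs_nonneg x]
  have hpow : |x| ^ r ≤ 1 + n ! * exp |x| := by
    have hfact : |x| ^ n ≤ n ! * exp |x| := by
      have := pow_div_factorial_le_exp (x := |x|) (abs_nonneg x) n
      rwa [div_le_iff₀ (by positivity), mul_comm] at this
    rcases le_total |x| 1 with h | h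
    · linarith [rpow_le_one (abs_nonneg x) h hr, (by positivity : (0:ℝ) ≤ n ! * exp |x|)]
    · calc |x| ^ r ≤ |x| ^ (n : ℝ) := rpow_le_rpow_of_exponent_le h (Nat.le_ceil r)
        _ ≤ 1 + n ! * exp |x| := by rw [rpow_natCast]; linarith
  have : (0 : ℝ) ≤ n ! := by positivity
  nlinarith

-- From `|x| ^ r ≤ (1 + ⌈r⌉!) · 2 cosh x` and `∏ cosh bᵢ ≤ exp (1 / 2)` when `∑ bᵢ ^ 2 ≤ 1`.
noncomputable def khintchineConst (r : ℝ) : ℝ := 2 * (1 + ⌈r⌉₊ !) * exp (1 / 2)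

lemma one_le_khintchineConst (r : ℝ) : 1 ≤ khintchineConst r := by
  have := one_le_exp (by norm_num : (0:ℝ) ≤ 1 / 2)
  have : (0 : ℝ) ≤ ⌈r⌉₊ ! := by positivity
  unfold khintchineConst; nlinarith

lemma sum_powerset_abs_rpow_le_of_sum_sq_le_one {r : ℝ} (hr : 0 ≤ r) (S : Finset ι)
    (b : ι → ℝ) (hb : ∑ i ∈ S, b i ^ 2 ≤ 1) :
    ∑ Λ ∈ S.powerset, |∑ i ∈ S, signPattern Λ i * b i| ^ r ≤ khintchineConst r * 2 ^ S.card := by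
  have hexp (a : ι → ℝ) (ha : ∑ i ∈ S, a i ^ 2 ≤ 1) :
      ∑ Λ ∈ S.powerset, exp (∑ i ∈ S, signPattern Λ i * a i) ≤ 2 ^ S.card * exp (1 / 2) :=
    (sum_powerset_exp_signPattern_le S a).trans <| by gcongr
  have hneg := hexp (-b) (by simpa using hb)
  simp only [Pi.neg_apply, mul_neg, sum_neg_distrib] at hneg
  calc ∑ Λ ∈ S.powerset, |∑ i ∈ S, signPattern Λ i * b i| ^ r
      ≤ ∑ Λ ∈ S.powerset, (1 + ⌈r⌉₊ !) * (exp (∑ i ∈ S, signPattern Λ i * b i) +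
          exp (-∑ i ∈ S, signPattern Λ i * b i)) :=
        sum_le_sum fun Λ _ => abs_rpow_le_mul_exp_add_exp hr _
    _ ≤ (1 + ⌈r⌉₊ !) * (2 ^ S.card * exp (1 / 2) + 2 ^ S.card * exp (1 / 2)) := by
        rw [← mul_sum, sum_add_distrib]
        gcongr
        exact hexp b hb
    _ = khintchineConst r * 2 ^ S.card := by unfold khintchineConst; ring

theorem khintchine {r : ℝ} (hr : 0 < r) (S : Finset ι) (a : ι → ℝ) :
    ∑ Λ ∈ S.powerset, |∑ i ∈ S, signPattern Λ i * a i| ^ r ≤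
      khintchineConst r * 2 ^ S.card * (∑ i ∈ S, a i ^ 2) ^ (r / 2) := by
  have hs : 0 ≤ ∑ i ∈ S, a i ^ 2 := sum_nonneg fun i _ => sq_nonneg _
  rcases hs.eq_or_lt with hs0 | hs0
  · have ha : ∀ i ∈ S, a i = 0 := fun i hi =>
      pow_eq_zero_iff two_ne_zero |>.1 <|
        (sum_eq_zero_iff_of_nonneg fun i _ => sq_nonneg (a i)).1 hs0.symm i hi
    have hsum (Λ : Finset ι) : ∑ i ∈ S, signPattern Λ i * a i = 0 :=
      sum_eq_zero fun i hi => by rw [ha i hi, mul_zero]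
    simp [hsum, ← hs0, zero_rpow hr.ne', zero_rpow (half_pos hr).ne']
  set σ := √(∑ i ∈ S, a i ^ 2) with hσ
  have hσ0 : 0 < σ := sqrt_pos.2 hs0
  have hσr : (∑ i ∈ S, a i ^ 2) ^ (r / 2) = σ ^ r := by
    rw [hσ, sqrt_eq_rpow, ← rpow_mul hs]
    ring_nf
  have hscale (Λ : Finset ι) : |∑ i ∈ S, signPattern Λ i * a i| ^ r =
      σ ^ r * |∑ i ∈ S, signPattern Λ i * (a i / σ)| ^ r := by
    rw [← mul_rpow hσ0.le (abs_nonneg _), ← abs_of_pos hσ0, ← abs_mul, mul_sum, abs_of_pos hσ0]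
    congr 2
    exact sum_congr rfl fun i _ => by field_simp
  have hb : ∑ i ∈ S, (a i / σ) ^ 2 ≤ 1 := by
    simp_rw [div_pow, ← sum_div, hσ, sq_sqrt hs]
    exact div_self_le_one _
  rw [sum_congr rfl fun Λ _ => hscale Λ, ← mul_sum, hσr, mul_comm]
  gcongr
  exact sum_powerset_abs_rpow_le_of_sum_sq_le_one hr.le S _ hb

end Khintchine

section Lp

variable {ι Ω : Type*} [MeasurableSpace Ω] {μ : Measure Ω} {p : ℝ≥0∞}

lemma lintegral_rpow_eq_eLpNorm_rpow (hp0 : p ≠ 0) (hptop : p ≠ ⊤) {E : Type*} [ENorm E]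
    (f : Ω → E) : ∫⁻ ω, ‖f ω‖ₑ ^ p.toReal ∂μ = eLpNorm f p μ ^ p.toReal := by
  rw [eLpNorm_eq_eLpNorm' hp0 hptop,
    lintegral_rpow_enorm_eq_rpow_eLpNorm' (ENNReal.toReal_pos hp0 hptop)]

lemma lintegral_sum_sq_rpow_le (hp2 : 2 ≤ p) (hptop : p ≠ ⊤) (S : Finset ι) {f : ι → Ω → ℝ}
    (hf : ∀ i, AEStronglyMeasurable (f i) μ) :
    ∫⁻ ω, ENNReal.ofReal (∑ i ∈ S, f i ω ^ 2) ^ (p.toReal / 2) ∂μ ≤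
      (∑ i ∈ S, eLpNorm (f i) p μ ^ 2) ^ (p.toReal / 2) := by
  have hp0 : p / 2 ≠ 0 := by
    simpa using (lt_of_lt_of_le two_pos hp2).ne'
  have hp1 : 1 ≤ p / 2 := by
    rwa [ENNReal.le_div_iff_mul_le (by simp) (by simp), one_mul]
  have hpt : p / 2 ≠ ⊤ := ENNReal.div_ne_top hptop two_ne_zero
  have hr : p.toReal / 2 = (p / 2).toReal := by simp [ENNReal.toReal_div]
  have hsq (i : ι) : eLpNorm (fun ω => ‖f i ω‖ ^ (2 : ℝ)) (p / 2) μ = eLpNorm (f i) p μ ^ 2 := by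
    rw [eLpNorm_norm_rpow _ two_pos, ENNReal.ofReal_ofNat,
      ENNReal.div_mul_cancel two_ne_zero ENNReal.ofNat_ne_top]
    norm_cast
  have hfun : (fun ω => ∑ i ∈ S, f i ω ^ 2) = ∑ i ∈ S, fun ω => ‖f i ω‖ ^ (2 : ℝ) := by
    ext ω; simp
  calc ∫⁻ ω, ENNReal.ofReal (∑ i ∈ S, f i ω ^ 2) ^ (p.toReal / 2) ∂μ
      = eLpNorm (fun ω => ∑ i ∈ S, f i ω ^ 2) (p / 2) μ ^ (p.toReal / 2) := by
        rw [hr, ← lintegral_rpow_eq_eLpNorm_rpow hp0 hpt]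
        refine lintegral_congr fun ω => ?_
        rw [← ofReal_norm, Real.norm_of_nonneg (sum_nonneg fun i _ => sq_nonneg _)]
    _ ≤ (∑ i ∈ S, eLpNorm (f i) p μ ^ 2) ^ (p.toReal / 2) := by
        rw [hfun]
        gcongr
        refine (eLpNorm_sum_le (fun i _ => ?_) hp1).trans_eq (sum_congr rfl fun i _ => hsq i)
        exact (hf i).norm.aemeasurable.pow_const _ |>.aestronglyMeasurable

lemma Lp.ofReal_norm_rpow_eq_lintegral [Fact (1 ≤ p)] (hptop : p ≠ ⊤) (g : Lp ℝ p μ) :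
    ENNReal.ofReal (‖g‖ ^ p.toReal) = ∫⁻ ω, ‖g ω‖ₑ ^ p.toReal ∂μ := by
  have hp0 : p ≠ 0 := (lt_of_lt_of_le one_pos Fact.out).ne'
  rw [lintegral_rpow_eq_eLpNorm_rpow hp0 hptop, ← ENNReal.ofReal_rpow_of_nonneg (norm_nonneg _)
    ENNReal.toReal_nonneg, ofReal_norm, Lp.enorm_def]

lemma Lp.coeFn_sum_smul [Fact (1 ≤ p)] (S : Finset ι) (a : ι → ℝ) (x : ι → Lp ℝ p μ) :
    ∀ᵐ ω ∂μ, (∑ i ∈ S, a i • x i : Lp ℝ p μ) ω = ∑ i ∈ S, a i * x i ω := by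
  have hsmul : ∀ᵐ ω ∂μ, ∀ i ∈ S, (a i • x i : Lp ℝ p μ) ω = a i * x i ω := by
    rw [Filter.eventually_all_finset]
    exact fun i _ => Lp.coeFn_smul _ _
  filter_upwards [Lp.coeFn_fun_finsetSum S fun i => a i • x i, hsmul] with ω hsum hsmul
  rw [hsum]
  exact sum_congr rfl hsmul

variable [DecidableEq ι]

lemma Lp.ae_sum_powerset_enorm_rpow_le [Fact (1 ≤ p)] {r : ℝ} (hr : 0 < r) (S : Finset ι)
    (x : ι → Lp ℝ p μ) :
    ∀ᵐ ω ∂μ, ∑ Λ ∈ S.powerset, ‖(∑ i ∈ S, signPattern Λ i • x i : Lp ℝ p μ) ω‖ₑ ^ r ≤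
      ENNReal.ofReal (khintchineConst r * 2 ^ S.card) *
        ENNReal.ofReal (∑ i ∈ S, x i ω ^ 2) ^ (r / 2) := by
  have hcoe : ∀ᵐ ω ∂μ, ∀ Λ ∈ S.powerset,
      (∑ i ∈ S, signPattern Λ i • x i : Lp ℝ p μ) ω = ∑ i ∈ S, signPattern Λ i * x i ω := by
    rw [Filter.eventually_all_finset]
    exact fun Λ _ => Lp.coeFn_sum_smul S _ x
  filter_upwards [hcoe] with ω hω
  calc ∑ Λ ∈ S.powerset, ‖(∑ i ∈ S, signPattern Λ i • x i : Lp ℝ p μ) ω‖ₑ ^ r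
      = ENNReal.ofReal (∑ Λ ∈ S.powerset, |∑ i ∈ S, signPattern Λ i * x i ω| ^ r) := by
        rw [ENNReal.ofReal_sum_of_nonneg fun Λ _ => by positivity]
        refine sum_congr rfl fun Λ hΛ => ?_
        rw [hω Λ hΛ, ← ofReal_norm, Real.norm_eq_abs,
          ENNReal.ofReal_rpow_of_nonneg (abs_nonneg _) hr.le]
    _ ≤ ENNReal.ofReal (khintchineConst r * 2 ^ S.card * (∑ i ∈ S, x i ω ^ 2) ^ (r / 2)) :=
        ENNReal.ofReal_le_ofReal (khintchine hr S fun i => x i ω)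
    _ = _ := by
        have := one_le_khintchineConst r
        rw [ENNReal.ofReal_mul (by positivity),
          ENNReal.ofReal_rpow_of_nonneg (sum_nonneg fun i _ => sq_nonneg _) (by positivity)]

-- `L_p` has Rademacher type 2.
theorem Lp.sum_powerset_norm_sum_signPattern_rpow_le [Fact (1 ≤ p)] (hp2 : 2 ≤ p)
    (hptop : p ≠ ⊤) (S : Finset ι) (x : ι → Lp ℝ p μ) :
    ∑ Λ ∈ S.powerset, ‖∑ i ∈ S, signPattern Λ i • x i‖ ^ p.toReal ≤
      khintchineConst p.toReal * 2 ^ S.card * (∑ i ∈ S, ‖x i‖ ^ 2) ^ (p.toReal / 2) := by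
  set r := p.toReal
  have hr : 0 < r := ENNReal.toReal_pos (lt_of_lt_of_le two_pos hp2).ne' hptop
  set B := khintchineConst r * 2 ^ S.card
  have hB : 0 ≤ B := by have := one_le_khintchineConst r; positivity
  have hsum_sq : ENNReal.ofReal ((∑ i ∈ S, ‖x i‖ ^ 2) ^ (r / 2)) =
      (∑ i ∈ S, eLpNorm (x i) p μ ^ 2) ^ (r / 2) := by
    rw [← ENNReal.ofReal_rpow_of_nonneg (by positivity) (by positivity),
      ENNReal.ofReal_sum_of_nonneg fun i _ => by positivity]
    simp_rw [ENNReal.ofReal_pow (norm_nonneg _), ofReal_norm, Lp.enorm_def]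
  rw [← ENNReal.ofReal_le_ofReal_iff (by positivity),
    ENNReal.ofReal_sum_of_nonneg fun Λ _ => by positivity, ENNReal.ofReal_mul hB, hsum_sq]
  rw [sum_congr rfl fun Λ _ => Lp.ofReal_norm_rpow_eq_lintegral hptop _,
    ← lintegral_finsetSum' _ fun Λ _ => (Lp.aestronglyMeasurable _).enorm.pow_const _]
  calc ∫⁻ ω, ∑ Λ ∈ S.powerset, ‖(∑ i ∈ S, signPattern Λ i • x i : Lp ℝ p μ) ω‖ₑ ^ r ∂μ
      ≤ ∫⁻ ω, ENNReal.ofReal B * ENNReal.ofReal (∑ i ∈ S, x i ω ^ 2) ^ (r / 2) ∂μ :=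
        lintegral_mono_ae (Lp.ae_sum_powerset_enorm_rpow_le hr S x)
    _ ≤ ENNReal.ofReal B * (∑ i ∈ S, eLpNorm (x i) p μ ^ 2) ^ (r / 2) := by
        rw [lintegral_const_mul' _ _ ENNReal.ofReal_ne_top]
        gcongr
        exact lintegral_sum_sq_rpow_le hp2 hptop S fun i => Lp.aestronglyMeasurable _

theorem Lp.norm_sum_le_mul_sqrt_sum_sq [Fact (1 ≤ p)] (hp2 : 2 ≤ p) (hptop : p ≠ ⊤)
    {ψ : ℕ → Lp ℝ p μ} (hψ : ∀ n, ‖ψ n‖ ≤ 1) {L : ℝ} (hL : 0 ≤ L)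
    (hflip : ∀ (S Λ : Finset ℕ), Λ ⊆ S → ∀ c : ℕ → ℝ,
      ‖∑ n ∈ S, c n • ψ n‖ ≤ L * ‖∑ n ∈ S, signPattern Λ n • c n • ψ n‖)
    (S : Finset ℕ) (c : ℕ → ℝ) :
    ‖∑ n ∈ S, c n • ψ n‖ ≤
      L * khintchineConst p.toReal ^ p.toReal⁻¹ * √(∑ n ∈ S, c n ^ 2) := by
  set r := p.toReal
  have hr : 0 < r := ENNReal.toReal_pos (lt_of_lt_of_le two_pos hp2).ne' hptop
  set B := khintchineConst r
  have hB : 0 ≤ B := zero_le_one.trans (one_le_khintchineConst r)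
  set s := ∑ n ∈ S, c n ^ 2
  have hs : 0 ≤ s := sum_nonneg fun n _ => sq_nonneg _
  have hcoef : ∑ n ∈ S, ‖c n • ψ n‖ ^ 2 ≤ s := by
    refine sum_le_sum fun n _ => ?_
    rw [norm_smul, Real.norm_eq_abs, mul_pow, sq_abs]
    have : ‖ψ n‖ ^ 2 ≤ 1 := pow_le_one₀ (norm_nonneg _) (hψ n)
    nlinarith [sq_nonneg (c n)]
  have hpow : 2 ^ S.card * ‖∑ n ∈ S, c n • ψ n‖ ^ r ≤ 2 ^ S.card * (L ^ r * B * s ^ (r / 2)) :=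
    calc 2 ^ S.card * ‖∑ n ∈ S, c n • ψ n‖ ^ r
        = ∑ Λ ∈ S.powerset, ‖∑ n ∈ S, c n • ψ n‖ ^ r := by
          rw [sum_const, card_powerset, nsmul_eq_mul, Nat.cast_pow, Nat.cast_two]
      _ ≤ ∑ Λ ∈ S.powerset, L ^ r * ‖∑ n ∈ S, signPattern Λ n • c n • ψ n‖ ^ r := by
          refine sum_le_sum fun Λ hΛ => ?_
          rw [← Real.mul_rpow hL (norm_nonneg _)]
          exact Real.rpow_le_rpow (norm_nonneg _) (hflip S Λ (mem_powerset.1 hΛ) c) hr.le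
      _ ≤ L ^ r * (B * 2 ^ S.card * (∑ n ∈ S, ‖c n • ψ n‖ ^ 2) ^ (r / 2)) := by
          rw [← mul_sum]
          gcongr
          exact Lp.sum_powerset_norm_sum_signPattern_rpow_le hp2 hptop S fun n => c n • ψ n
      _ ≤ 2 ^ S.card * (L ^ r * B * s ^ (r / 2)) := by
          have : (∑ n ∈ S, ‖c n • ψ n‖ ^ 2) ^ (r / 2) ≤ s ^ (r / 2) := by gcongr
          rw [show L ^ r * (B * 2 ^ S.card * (∑ n ∈ S, ‖c n • ψ n‖ ^ 2) ^ (r / 2)) =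
            2 ^ S.card * (L ^ r * B * (∑ n ∈ S, ‖c n • ψ n‖ ^ 2) ^ (r / 2)) by ring]
          gcongr
  have hrhs : (L * B ^ r⁻¹ * √s) ^ r = L ^ r * B * s ^ (r / 2) := by
    rw [Real.mul_rpow (by positivity) (by positivity), Real.mul_rpow hL (by positivity),
      Real.rpow_inv_rpow hB hr.ne', Real.sqrt_eq_rpow, ← Real.rpow_mul hs]
    ring_nf
  rw [← Real.rpow_le_rpow_iff (norm_nonneg _) (by positivity) hr, hrhs]
  exact le_of_mul_le_mul_left hpow (by positivity)

end Lp

section UnconditionalBasis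

variable {E : Type*} [NormedAddCommGroup E] [NormedSpace ℝ E] {ψ : ℕ → E}

lemma hasSum_indicator_smul (s : Finset ℕ) (c : ℕ → ℝ) :
    HasSum (fun n => (s : Set ℕ).indicator c n • ψ n) (∑ n ∈ s, c n • ψ n) := by
  convert hasSum_sum_of_ne_finset_zero (L := SummationFilter.unconditional ℕ) (s := s)
    (f := fun n => (s : Set ℕ).indicator c n • ψ n) fun n hn => by simp [hn] using 1
  exact sum_congr rfl fun n hn => by rw [Set.indicator_of_mem (mem_coe.2 hn)]

variable {cf : E → ℕ → ℝ} {K : ℝ}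
  (huniq : ∀ (g : E) (c : ℕ → ℝ), HasSum (fun n => c n • ψ n) g → c = cf g)
  (hunc : ∀ (f : E) (Λ : Set ℕ),
    ∃ g : E, HasSum (fun n => Λ.indicator (cf f) n • ψ n) g ∧ ‖g‖ ≤ K * ‖f‖)
include huniq hunc

lemma norm_sum_le_of_subset {Λ S : Finset ℕ} (hΛ : Λ ⊆ S) (c : ℕ → ℝ) :
    ‖∑ n ∈ Λ, c n • ψ n‖ ≤ K * ‖∑ n ∈ S, c n • ψ n‖ := by
  set g := ∑ n ∈ S, c n • ψ n
  have hcf : (S : Set ℕ).indicator c = cf g := huniq g _ (hasSum_indicator_smul S c)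
  obtain ⟨gΛ, hgΛ, hnorm⟩ := hunc g Λ
  rw [← hcf, Set.indicator_indicator, Set.inter_eq_left.2 (coe_subset.2 hΛ)] at hgΛ
  rwa [(hasSum_indicator_smul Λ c).unique hgΛ]

lemma norm_sum_le_mul_norm_sum_signPattern {Λ S : Finset ℕ} (hΛ : Λ ⊆ S) (c : ℕ → ℝ) :
    ‖∑ n ∈ S, c n • ψ n‖ ≤ (2 * K + 1) * ‖∑ n ∈ S, signPattern Λ n • c n • ψ n‖ := by
  set g' := ∑ n ∈ S, signPattern Λ n • c n • ψ n
  have hproj : ∑ n ∈ Λ, c n • ψ n = ∑ n ∈ Λ, (signPattern Λ n * c n) • ψ n :=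
    sum_congr rfl fun n hn => by rw [signPattern_of_mem hn, one_mul]
  have hsplit : ∑ n ∈ S, c n • ψ n = (2 : ℝ) • ∑ n ∈ Λ, c n • ψ n - g' := by
    have hterm (n : ℕ) : c n • ψ n + signPattern Λ n • c n • ψ n =
        if n ∈ Λ then (2 : ℝ) • c n • ψ n else 0 := by
      by_cases hn : n ∈ Λ
      · rw [if_pos hn, signPattern_of_mem hn, one_smul, two_smul]
      · rw [if_neg hn, signPattern, if_neg hn, neg_one_smul, add_neg_cancel]
    rw [eq_sub_iff_add_eq, ← sum_add_distrib, smul_sum, sum_congr rfl fun n _ => hterm n,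
      sum_ite_mem, inter_eq_right.2 hΛ]
  have hK : ‖∑ n ∈ Λ, c n • ψ n‖ ≤ K * ‖g'‖ := by
    rw [hproj]
    simp_rw [g', smul_smul]
    exact norm_sum_le_of_subset huniq hunc hΛ _
  calc ‖∑ n ∈ S, c n • ψ n‖ ≤ 2 * ‖∑ n ∈ Λ, c n • ψ n‖ + ‖g'‖ := by
        rw [hsplit]
        refine (norm_sub_le _ _).trans_eq ?_
        rw [norm_smul, Real.norm_two]
    _ ≤ (2 * K + 1) * ‖g'‖ := by linarith

end UnconditionalBasis

section Greedy

lemma hasSum_indicator_tail {α : Type*} [AddCommGroup α] [TopologicalSpace α]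
    [IsTopologicalAddGroup α] {F : ℕ → α} {a : α} (h : HasSum F a) (m : ℕ) :
    HasSum ({j | m ≤ j}.indicator F) (a - ∑ j ∈ range m, F j) := by
  have hcompl : {j | m ≤ j} = (↑(range m) : Set ℕ)ᶜ := by ext j; simp
  rw [hcompl, Set.indicator_compl]
  exact h.sub (hasSum_subtype_iff_indicator.1 ((range m).hasSum F))

variable {E : Type*} [NormedAddCommGroup E] [NormedSpace ℝ E] {ψ : ℕ → E}

lemma hasSum_greedy_remainder {c : ℕ → ℝ} {f : E} (hf : HasSum (fun n => c n • ψ n) f)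
    (e : ℕ ≃ ℕ) (m : ℕ) :
    HasSum (fun n => {n | m ≤ e.symm n}.indicator c n • ψ n)
      (f - ∑ j ∈ range m, c (e j) • ψ (e j)) := by
  rw [← e.hasSum_iff]
  convert hasSum_indicator_tail (e.hasSum_iff.2 hf) m using 1
  · ext j
    by_cases hj : m ≤ j <;> simp [Set.indicator, hj]
  · rfl

lemma norm_le_of_hasSum_of_sum_sq_le {c : ℕ → ℝ} {g : E} (hg : HasSum (fun n => c n • ψ n) g)
    {C M : ℝ} (hC : 0 ≤ C) (hsq : ∀ S : Finset ℕ, ‖∑ n ∈ S, c n • ψ n‖ ≤ C * √(∑ n ∈ S, c n ^ 2))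
    (hM : ∀ S : Finset ℕ, ∑ n ∈ S, c n ^ 2 ≤ M) : ‖g‖ ≤ C * √M :=
  le_of_tendsto' hg.tendsto_sum_nat.norm fun t =>
    (hsq _).trans (by gcongr; exact hM _)

lemma mul_abs_le_tsum_of_antitone {c : ℕ → ℝ} (hc : Summable fun n => |c n|) {e : ℕ ≃ ℕ}
    (he : Antitone fun j => |c (e j)|) (m : ℕ) : m * |c (e m)| ≤ ∑' n, |c n| :=
  calc m * |c (e m)| ≤ ∑ j ∈ range m, |c (e j)| := by
        simpa using card_nsmul_le_sum (range m) _ _ fun j hj => he (mem_range.1 hj).le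
    _ = ∑ n ∈ (range m).map e.toEmbedding, |c n| := by rw [sum_map]; rfl
    _ ≤ ∑' n, |c n| := hc.sum_le_tsum _ fun n _ => abs_nonneg _

lemma sum_sq_indicator_greedy_tail_le {c : ℕ → ℝ} (hc : Summable fun n => |c n|) {e : ℕ ≃ ℕ}
    (he : Antitone fun j => |c (e j)|) {m : ℕ} (hm : 0 < m) (S : Finset ℕ) :
    ∑ n ∈ S, {n | m ≤ e.symm n}.indicator c n ^ 2 ≤ (∑' n, |c n|) ^ 2 / m := by
  set A := ∑' n, |c n|
  have htail (n : ℕ) : |{n | m ≤ e.symm n}.indicator c n| ≤ |c (e m)| := by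
    by_cases hn : m ≤ e.symm n
    · simpa [hn] using he hn
    · simp [hn]
  have hsum : ∑ n ∈ S, |{n | m ≤ e.symm n}.indicator c n| ≤ A :=
    (sum_le_sum fun n _ => by simp only [Set.indicator]; split_ifs <;> simp).trans
      (hc.sum_le_tsum _ fun n _ => abs_nonneg _)
  calc ∑ n ∈ S, {n | m ≤ e.symm n}.indicator c n ^ 2
      ≤ ∑ n ∈ S, |c (e m)| * |{n | m ≤ e.symm n}.indicator c n| := by
        refine sum_le_sum fun n _ => ?_
        rw [← sq_abs, sq]
        exact mul_le_mul_of_nonneg_right (htail n) (abs_nonneg _)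
    _ ≤ A / m * A := by
        rw [← mul_sum]
        have := mul_abs_le_tsum_of_antitone hc he m
        gcongr
        rw [le_div_iff₀ (by exact_mod_cast hm)]
        linarith
    _ = A ^ 2 / m := by ring

lemma le_add_mul_rpow_mul_rpow {z a b X Y α : ℝ} (hz : 0 ≤ z) (ha : 0 ≤ a) (hb : 0 ≤ b)
    (hX : 0 ≤ X) (hY : 0 ≤ Y) (hα0 : 0 ≤ α) (hα1 : α ≤ 1) (hzX : z ≤ a * X) (hzY : z ≤ b * Y) :
    z ≤ (a + b) * X ^ (1 - α) * Y ^ α := by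
  have hgeom : a ^ (1 - α) * b ^ α ≤ a + b := by
    refine (Real.geom_mean_le_arith_mean2_weighted (by linarith) hα0 ha hb (by ring)).trans ?_
    nlinarith
  calc z = z ^ (1 - α) * z ^ α := by
        rw [← Real.rpow_add' hz (by norm_num), sub_add_cancel, Real.rpow_one]
    _ ≤ (a * X) ^ (1 - α) * (b * Y) ^ α := by gcongr
    _ = a ^ (1 - α) * b ^ α * (X ^ (1 - α) * Y ^ α) := by
        rw [Real.mul_rpow ha hX, Real.mul_rpow hb hY]; ring
    _ ≤ (a + b) * (X ^ (1 - α) * Y ^ α) := by gcongr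
    _ = (a + b) * X ^ (1 - α) * Y ^ α := by ring

end Greedy

/-- Let `2 ≤ p < ∞` and let `Ψ = (ψ n)` be an unconditional basis of `L_p(Ω, μ)` with
`‖ψ n‖_p ≤ 1`. Here `cf f` is the coefficient sequence of `f` (expansions are unique),
and unconditionality is expressed by the uniform boundedness of the coordinate
projections `P_Λ`. Then there is a constant `C = C(p, Ψ)` such that for every `f` with
absolutely summable coefficients (finite `A₁`-norm), every realization of the TGA (given
by a decreasing rearrangement `e` of the coefficients), every `m ≥ 1` and `α ∈ [0,1]`:
`‖f - G_m(f, Ψ)‖_p ≤ C m^(-α/2) ‖f‖_p^(1-α) ‖f‖_{A₁(Ψ)}^α`. -/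
theorem stmt7 {Ω : Type*} [MeasurableSpace Ω] (μ : Measure Ω)
    (p : ℝ≥0∞) [Fact (1 ≤ p)] (hp2 : 2 ≤ p) (hptop : p ≠ ⊤)
    (ψ : ℕ → Lp ℝ p μ) (hψ : ∀ n, ‖ψ n‖ ≤ 1)
    (cf : Lp ℝ p μ → ℕ → ℝ)
    (hbasis : ∀ f, HasSum (fun n => cf f n • ψ n) f)
    (huniq : ∀ (g : Lp ℝ p μ) (c : ℕ → ℝ), HasSum (fun n => c n • ψ n) g → c = cf g)
    (K : ℝ) (hK : 0 < K)
    (hunc : ∀ (f : Lp ℝ p μ) (Λ : Set ℕ),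
      ∃ g : Lp ℝ p μ, HasSum (fun n => Λ.indicator (cf f) n • ψ n) g ∧ ‖g‖ ≤ K * ‖f‖) :
    ∃ C > 0, ∀ f : Lp ℝ p μ, Summable (fun n => |cf f n|) →
      ∀ e : ℕ ≃ ℕ, Antitone (fun j => |cf f (e j)|) →
      ∀ m : ℕ, 1 ≤ m → ∀ α : ℝ, 0 ≤ α → α ≤ 1 →
      ‖f - ∑ j ∈ Finset.range m, cf f (e j) • ψ (e j)‖ ≤
        C * (m : ℝ) ^ (-α / 2) * ‖f‖ ^ (1 - α) * (∑' n, |cf f n|) ^ α := by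
  set C₂ := (2 * K + 1) * khintchineConst p.toReal ^ p.toReal⁻¹
  have hC₂ : 0 ≤ C₂ := by have := one_le_khintchineConst p.toReal; positivity
  have hsq := Lp.norm_sum_le_mul_sqrt_sum_sq hp2 hptop hψ (by positivity)
    fun S Λ hΛ c => norm_sum_le_mul_norm_sum_signPattern huniq hunc hΛ c
  refine ⟨K + C₂, by positivity, fun f hf e he m hm α hα0 hα1 => ?_⟩
  have hm0 : (0 : ℝ) < m := by exact_mod_cast hm
  have hrem := hasSum_greedy_remainder (hbasis f) e m
  set R := f - ∑ j ∈ range m, cf f (e j) • ψ (e j)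
  have hR₁ : ‖R‖ ≤ K * ‖f‖ := by
    obtain ⟨g, hg, hgK⟩ := hunc f {n | m ≤ e.symm n}
    rwa [hrem.unique hg]
  have hR₂ : ‖R‖ ≤ C₂ * ((m : ℝ) ^ (-1 / 2 : ℝ) * ∑' n, |cf f n|) := by
    refine (norm_le_of_hasSum_of_sum_sq_le hrem hC₂ (fun S => hsq S _)
      (sum_sq_indicator_greedy_tail_le hf he hm)).trans_eq ?_
    rw [Real.sqrt_div' _ hm0.le, Real.sqrt_sq (tsum_nonneg fun n => abs_nonneg _),
      Real.sqrt_eq_rpow, div_eq_mul_inv, ← Real.rpow_neg hm0.le]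
    ring_nf
  calc ‖R‖ ≤ (K + C₂) * ‖f‖ ^ (1 - α) * ((m : ℝ) ^ (-1 / 2 : ℝ) * ∑' n, |cf f n|) ^ α :=
        le_add_mul_rpow_mul_rpow (norm_nonneg _) hK.le hC₂ (norm_nonneg _) (by positivity)
          hα0 hα1 hR₁ hR₂
    _ = (K + C₂) * (m : ℝ) ^ (-α / 2) * ‖f‖ ^ (1 - α) * (∑' n, |cf f n|) ^ α := by
        rw [Real.mul_rpow (by positivity) (by positivity), ← Real.rpow_mul hm0.le]
        ring_nf
end
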